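/- arXiv:2509.12852 — 4 statements merged into one kernel-verified Lean document; each statement's English description precedes it below -/
import Mathlib

section
/- Let pb < gb be real numbers, C₁, C₂ > 0, and let x be any real number. Define L(x) = C₁(pb - x) + C₂(gb - x) if x ≤ pb; L(x) = C₁(x - pb) + C₂(x - gb) if x ≥ gb; and L(x) = C₂(gb - x) - C₁(pb - x) if pb < x < gb. Then L(x) ≥ min{C₁, C₂}·(gb - pb) for all x. -/
/-! On each of the three pieces, `L x` is `C₁ |x - pb| + C₂ |x - gb|`, a weighted sum of the
distances from `x` to `pb` and to `gb`. Bounding both weights below by `min C₁ C₂`, the triangle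
inequality gives `L x ≥ min C₁ C₂ * |gb - pb|`. -/

theorem min_mul_dist_le_mul_dist_add_mul_dist {α : Type*} [PseudoMetricSpace α] {a b : ℝ}
    (ha : 0 ≤ a) (hb : 0 ≤ b) (x p q : α) :
    min a b * dist p q ≤ a * dist x p + b * dist x q :=
  calc min a b * dist p q
      ≤ min a b * (dist x p + dist x q) :=
        mul_le_mul_of_nonneg_left (dist_triangle_left p q x) (le_min ha hb)
    _ = min a b * dist x p + min a b * dist x q := mul_add _ _ _
    _ ≤ a * dist x p + b * dist x q :=
        add_le_add (mul_le_mul_of_nonneg_right (min_le_left a b) dist_nonneg)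
          (mul_le_mul_of_nonneg_right (min_le_right a b) dist_nonneg)

theorem ite_eq_mul_abs_sub_add_mul_abs_sub {pb gb : ℝ} (h : pb ≤ gb) (C₁ C₂ x : ℝ) :
    (if x ≤ pb then C₁ * (pb - x) + C₂ * (gb - x)
      else if gb ≤ x then C₁ * (x - pb) + C₂ * (x - gb)
      else C₂ * (gb - x) - C₁ * (pb - x)) = C₁ * |x - pb| + C₂ * |x - gb| := by
  split_ifs with hxp hgx
  · rw [abs_of_nonpos (sub_nonpos.2 hxp), abs_of_nonpos (sub_nonpos.2 (hxp.trans h))]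
    ring
  · rw [abs_of_nonneg (sub_nonneg.2 (h.trans hgx)), abs_of_nonneg (sub_nonneg.2 hgx)]
  · rw [abs_of_pos (sub_pos.2 (not_le.1 hxp)), abs_of_neg (sub_neg.2 (not_le.1 hgx))]
    ring

/-- Corollary 1(b): the length `L(x)` of the support of the next-iteration PSO velocity
distribution is at least `min{C₁,C₂}·(gb - pb)` for every position `x`. -/
theorem velocity_support_length_lower_bound
    (pb gb C₁ C₂ : ℝ) (hpg : pb < gb) (hC₁ : 0 < C₁) (hC₂ : 0 < C₂)
    (L : ℝ → ℝ)
    (hL : ∀ x, L x = if x ≤ pb then C₁ * (pb - x) + C₂ * (gb - x)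
      else if gb ≤ x then C₁ * (x - pb) + C₂ * (x - gb)
      else C₂ * (gb - x) - C₁ * (pb - x)) :
    ∀ x : ℝ, L x ≥ min C₁ C₂ * (gb - pb) := by
  intro x
  have hdist : dist pb gb = gb - pb := by
    rw [dist_comm, Real.dist_eq, abs_of_pos (sub_pos.2 hpg)]
  rw [hL x, ite_eq_mul_abs_sub_add_mul_abs_sub hpg.le, ← hdist, ← Real.dist_eq, ← Real.dist_eq]
  exact min_mul_dist_le_mul_dist_add_mul_dist hC₁.le hC₂.le x pb gb
end

section
/- Let d₀ > 0, ub > lb with ub - lb ≥ d₀/8 · ⌈8(ub-lb)/d₀⌉⁻¹·⌈8(ub-lb)/d₀⌉ (automatically satisfied), and set δ_a ≤ d₀²/(128(ub-lb)). Define a_t = x₀ + t·v₀ - t(t-1)·δ_a where v₀ ≥ d₀/4 and t ranges over 0, …, ⌈8(ub-lb)/d₀⌉ - 1. Then for each t in this range, a_t - δ_a - a_{t-1} = v₀ - (2t-1)δ_a > d₀/8; in particular the intervals R_t = [a_t - δ_a, a_t] satisfy inf R_t > sup R_{t-1}. -/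
/-!
The gap `a t - δa - a (t - 1)` is `v₀ - (2t - 1)δa` by direct computation. Since
`t < 8(ub - lb)/d₀`, the bound `δa ≤ d₀²/(128(ub - lb))` gives `2tδa < d₀/8`, so the gap
exceeds `d₀/4 - d₀/8 = d₀/8`.
-/

lemma quadratic_chain_gap {x₀ v₀ δa : ℝ} {a : ℕ → ℝ}
    (ha : ∀ t : ℕ, a t = x₀ + t * v₀ - t * (t - 1) * δa) {t : ℕ} (ht : 1 ≤ t) :
    a t - δa - a (t - 1) = v₀ - (2 * t - 1) * δa := by
  obtain ⟨s, rfl⟩ : ∃ s, t = s + 1 := ⟨t - 1, by omega⟩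
  rw [ha, ha, Nat.add_sub_cancel]
  push_cast
  ring

lemma two_mul_sub_one_mul_lt {d₀ δa L t : ℝ} (hd₀ : 0 < d₀)
    (hδa : δa ≤ d₀ ^ 2 / (128 * L)) (ht : 1 ≤ 2 * t) (htL : t < 8 * L / d₀) :
    (2 * t - 1) * δa < d₀ / 8 := by
  rcases le_or_gt δa 0 with hδ | hδ
  · nlinarith [mul_nonpos_of_nonneg_of_nonpos (sub_nonneg.mpr ht) hδ]
  have hL : 0 < L := by
    by_contra! hL
    have : d₀ ^ 2 / (128 * L) ≤ 0 := div_nonpos_of_nonneg_of_nonpos (by positivity) (by linarith)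
    linarith
  have htd : t * d₀ < 8 * L := (lt_div_iff₀ hd₀).mp htL
  have hδL : δa * (128 * L) ≤ d₀ ^ 2 := (le_div_iff₀ (by positivity)).mp hδa
  nlinarith [mul_lt_mul_of_pos_left htd hd₀, mul_le_mul_of_nonneg_left hδL (by linarith : 0 ≤ t)]

theorem rightward_chain_intervals_increasing_general
    (x₀ v₀ d₀ δa lb ub : ℝ) (hd₀ : 0 < d₀)
    (hv₀ : v₀ ≥ d₀ / 4)
    (hδa : δa ≤ d₀ ^ 2 / (128 * (ub - lb)))
    (a : ℕ → ℝ) (ha : ∀ t : ℕ, a t = x₀ + t * v₀ - t * (t - 1) * δa) :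
    ∀ t : ℕ, 1 ≤ t → t ≤ ⌈8 * (ub - lb) / d₀⌉₊ - 1 →
      a t - δa - a (t - 1) = v₀ - (2 * t - 1) * δa ∧
        v₀ - (2 * t - 1) * δa > d₀ / 8 ∧
        a t - δa > a (t - 1) := by
  intro t ht1 ht2
  have htL : (t : ℝ) < 8 * (ub - lb) / d₀ := Nat.lt_ceil.mp (by omega)
  have ht1R : (1 : ℝ) ≤ 2 * t := by
    have : (1 : ℝ) ≤ t := by exact_mod_cast ht1
    linarith
  have hgap := quadratic_chain_gap ha ht1
  have hbound := two_mul_sub_one_mul_lt hd₀ hδa ht1R htL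
  exact ⟨hgap, by linarith, by linarith⟩

/-- Proposition A6.1: the intervals `R_t = [a_t - δ_a, a_t]` of the rightward inertial
motion chain are strictly increasing, with gap `a_t - δ_a - a_{t-1} = v₀ - (2t-1)δ_a > d₀/8`. -/
theorem rightward_chain_intervals_increasing
    (x₀ v₀ d₀ δa lb ub : ℝ) (hd₀ : 0 < d₀) (hlu : lb < ub)
    (hv₀ : v₀ ≥ d₀ / 4) (hδa_pos : 0 < δa)
    (hδa : δa ≤ d₀ ^ 2 / (128 * (ub - lb)))
    (a : ℕ → ℝ) (ha : ∀ t : ℕ, a t = x₀ + t * v₀ - t * (t - 1) * δa) :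
    ∀ t : ℕ, 1 ≤ t → t ≤ ⌈8 * (ub - lb) / d₀⌉₊ - 1 →
      a t - δa - a (t - 1) = v₀ - (2 * t - 1) * δa ∧
        v₀ - (2 * t - 1) * δa > d₀ / 8 ∧
        a t - δa > a (t - 1) :=
  rightward_chain_intervals_increasing_general x₀ v₀ d₀ δa lb ub hd₀ hv₀ hδa a ha
end

section
/- Let x(t+1) = 2x(t) - x(t-1) + C₁r₁(pb - x(t)) + C₂r₂(gb - x(t)) where r₁, r₂ range over [0,1], C₁, C₂ > 0 and pb < gb. Fix λ ∈ (0,1). If x(t) > λ·pb + (1-λ)·gb, then the set of attainable values of x(t+1) (as r₁, r₂ range over [0,1]²) contains the interval [2x(t) - x(t-1) - C₁(1-λ)(gb-pb), 2x(t) - x(t-1)]. If x(t) ≤ λ·pb + (1-λ)·gb, then the set of attainable values contains [2x(t) - x(t-1), 2x(t) - x(t-1) + C₂λ(gb-pb)]. -/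
/-! The attainable set is the continuous image of the connected unit square, so by the
intermediate value theorem it contains every value between those at two corners. The corner
`(0, 0)` gives `2 x(t) - x(t-1)`, and the corner `(1, 0)` (resp. `(0, 1)`) overshoots the other
endpoint of the claimed interval because `x(t) - pb ≥ (1 - λ)(gb - pb)`
(resp. `gb - x(t) ≥ λ (gb - pb)`) in the corresponding case. -/

open Set

theorem attainable_position_interval_general
    (pb gb C₁ C₂ lam xprev xcur : ℝ)
    (hC₁ : 0 < C₁) (hC₂ : 0 < C₂)
    (S : Set ℝ)
    (hS : S = (fun r : ℝ × ℝ =>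
      2 * xcur - xprev + C₁ * r.1 * (pb - xcur) + C₂ * r.2 * (gb - xcur)) ''
        (Set.Icc 0 1 ×ˢ Set.Icc 0 1)) :
    (xcur > lam * pb + (1 - lam) * gb →
      Set.Icc (2 * xcur - xprev - C₁ * (1 - lam) * (gb - pb)) (2 * xcur - xprev) ⊆ S) ∧
    (xcur ≤ lam * pb + (1 - lam) * gb →
      Set.Icc (2 * xcur - xprev) (2 * xcur - xprev + C₂ * lam * (gb - pb)) ⊆ S) := by
  subst hS
  have hsquare : IsPreconnected (Icc (0 : ℝ) 1 ×ˢ Icc (0 : ℝ) 1) :=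
    isPreconnected_Icc.prod isPreconnected_Icc
  have hcont : ContinuousOn (fun r : ℝ × ℝ =>
      2 * xcur - xprev + C₁ * r.1 * (pb - xcur) + C₂ * r.2 * (gb - xcur))
      (Icc 0 1 ×ˢ Icc 0 1) := by
    fun_prop
  have h00 : ((0 : ℝ), (0 : ℝ)) ∈ Icc (0 : ℝ) 1 ×ˢ Icc (0 : ℝ) 1 := by simp
  constructor
  · intro hx
    have h10 : ((1 : ℝ), (0 : ℝ)) ∈ Icc (0 : ℝ) 1 ×ˢ Icc (0 : ℝ) 1 := by simp
    have hgap : C₁ * ((1 - lam) * (gb - pb)) ≤ C₁ * (xcur - pb) :=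
      mul_le_mul_of_nonneg_left (by linarith) hC₁.le
    have hspan := hsquare.intermediate_value h10 h00 hcont
    simp only [mul_one, mul_zero, zero_mul, add_zero] at hspan
    exact (Icc_subset_Icc_left (by linarith)).trans hspan
  · intro hx
    have h01 : ((0 : ℝ), (1 : ℝ)) ∈ Icc (0 : ℝ) 1 ×ˢ Icc (0 : ℝ) 1 := by simp
    have hgap : C₂ * (lam * (gb - pb)) ≤ C₂ * (gb - xcur) :=
      mul_le_mul_of_nonneg_left (by linarith) hC₂.le
    have hspan := hsquare.intermediate_value h00 h01 hcont
    simp only [mul_one, mul_zero, zero_mul, add_zero] at hspan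
    exact (Icc_subset_Icc_right (by linarith)).trans hspan

/-- Lemma A1: the set of attainable next positions
`x(t+1) = 2x(t) - x(t-1) + C₁r₁(pb - x(t)) + C₂r₂(gb - x(t))`, as `(r₁, r₂)`
ranges over `[0,1]²`, contains the stated interval in each of the two cases. -/
theorem attainable_position_interval
    (pb gb C₁ C₂ lam xprev xcur : ℝ)
    (hpg : pb < gb) (hC₁ : 0 < C₁) (hC₂ : 0 < C₂)
    (hlam : lam ∈ Set.Ioo (0 : ℝ) 1)
    (S : Set ℝ)
    (hS : S = (fun r : ℝ × ℝ =>
      2 * xcur - xprev + C₁ * r.1 * (pb - xcur) + C₂ * r.2 * (gb - xcur)) ''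
        (Set.Icc 0 1 ×ˢ Set.Icc 0 1)) :
    (xcur > lam * pb + (1 - lam) * gb →
      Set.Icc (2 * xcur - xprev - C₁ * (1 - lam) * (gb - pb)) (2 * xcur - xprev) ⊆ S) ∧
    (xcur ≤ lam * pb + (1 - lam) * gb →
      Set.Icc (2 * xcur - xprev) (2 * xcur - xprev + C₂ * lam * (gb - pb)) ⊆ S) :=
  attainable_position_interval_general pb gb C₁ C₂ lam xprev xcur hC₁ hC₂ S hS
end

section
/- Consider the PSO velocity recursion with ω = 1 on the interval [lb, ub]: for t ≥ 2, if x(t-1) ≥ max{pb, gb} then v(t) ≤ v(t-1); if x(t-1) = lb then v(t) ≤ (C₁+C₂)(ub-lb); and if lb < x(t-1) < max{pb,gb} with v(t-1) = x(t-1) - x(t-2) then v(t) ≤ (C₁+C₂+1)(ub-lb). Consequently, if v(0) ≤ ub - lb and x(τ) ∈ [lb, ub] for all τ, then v(t) ≤ (C₁+C₂+1)(ub-lb) for all t ≥ 0. -/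
/-!
Both attraction terms `Cᵢ rᵢ (p - x)` are at most `Cᵢ (ub - lb)`, so one step raises the
velocity by at most `(C₁ + C₂)(ub - lb)`, and it cannot raise it at all once `x(t-1)` lies above
`pb` and `gb`. At `x(t-1) = lb` the previous velocity is `≤ 0`, and in the interior it equals the
last displacement, which is `≤ ub - lb`. An induction on `t` runs through these three cases.
-/

lemma mul_mul_sub_le_mul_sub {C r a b lb ub : ℝ} (hC : 0 ≤ C) (hr : r ∈ Set.Icc (0 : ℝ) 1)
    (ha : a ∈ Set.Icc lb ub) (hb : b ∈ Set.Icc lb ub) :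
    C * r * (a - b) ≤ C * (ub - lb) := by
  have hab : a - b ≤ ub - lb := by linarith [ha.2, hb.1]
  have hwidth : 0 ≤ ub - lb := by linarith [ha.1, ha.2]
  calc C * r * (a - b) ≤ C * r * (ub - lb) := by gcongr; exact mul_nonneg hC hr.1
    _ ≤ C * 1 * (ub - lb) := by gcongr; exact hr.2
    _ = C * (ub - lb) := by ring

section PSOStep

variable {lb ub pb gb C₁ C₂ r₁ r₂ x v v' : ℝ}
  (hstep : v' = v + C₁ * r₁ * (pb - x) + C₂ * r₂ * (gb - x))
include hstep

lemma pso_step_le_add (hC₁ : 0 ≤ C₁) (hC₂ : 0 ≤ C₂)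
    (hpb : pb ∈ Set.Icc lb ub) (hgb : gb ∈ Set.Icc lb ub)
    (hr₁ : r₁ ∈ Set.Icc (0 : ℝ) 1) (hr₂ : r₂ ∈ Set.Icc (0 : ℝ) 1) (hx : x ∈ Set.Icc lb ub) :
    v' ≤ v + (C₁ + C₂) * (ub - lb) := by
  have h₁ := mul_mul_sub_le_mul_sub hC₁ hr₁ hpb hx
  have h₂ := mul_mul_sub_le_mul_sub hC₂ hr₂ hgb hx
  linarith

lemma pso_step_le_of_max_le (hC₁ : 0 ≤ C₁) (hC₂ : 0 ≤ C₂) (hr₁ : 0 ≤ r₁) (hr₂ : 0 ≤ r₂)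
    (hx : max pb gb ≤ x) : v' ≤ v := by
  have h₁ : C₁ * r₁ * (pb - x) ≤ 0 :=
    mul_nonpos_of_nonneg_of_nonpos (mul_nonneg hC₁ hr₁) (by linarith [le_max_left pb gb])
  have h₂ : C₂ * r₂ * (gb - x) ≤ 0 :=
    mul_nonpos_of_nonneg_of_nonpos (mul_nonneg hC₂ hr₂) (by linarith [le_max_right pb gb])
  linarith

end PSOStep

theorem velocity_uniform_upper_bound_general
    (lb ub pb gb C₁ C₂ : ℝ)
    (hC₁ : 0 < C₁) (hC₂ : 0 < C₂)
    (hpb : pb ∈ Set.Icc lb ub) (hgb : gb ∈ Set.Icc lb ub)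
    (x v r₁ r₂ : ℕ → ℝ)
    (hr₁ : ∀ t, r₁ t ∈ Set.Icc (0 : ℝ) 1) (hr₂ : ∀ t, r₂ t ∈ Set.Icc (0 : ℝ) 1)
    (hx : ∀ t, x t ∈ Set.Icc lb ub)
    (hv : ∀ t : ℕ, 1 ≤ t →
      v t = v (t - 1) + C₁ * r₁ t * (pb - x (t - 1)) + C₂ * r₂ t * (gb - x (t - 1)))
    (hclamp : ∀ t : ℕ, 1 ≤ t → x t = lb → v t ≤ 0)
    (hinterior : ∀ t : ℕ, 2 ≤ t → lb < x (t - 1) → x (t - 1) < ub →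
      x (t - 1) = x (t - 2) + v (t - 1)) :
    (∀ t : ℕ, 2 ≤ t → x (t - 1) ≥ max pb gb → v t ≤ v (t - 1)) ∧
    (∀ t : ℕ, 2 ≤ t → x (t - 1) = lb → v t ≤ (C₁ + C₂) * (ub - lb)) ∧
    (∀ t : ℕ, 2 ≤ t → lb < x (t - 1) → x (t - 1) < max pb gb →
      v (t - 1) = x (t - 1) - x (t - 2) → v t ≤ (C₁ + C₂ + 1) * (ub - lb)) ∧
    (v 0 ≤ ub - lb → ∀ t : ℕ, v t ≤ (C₁ + C₂ + 1) * (ub - lb)) := by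
  have hgrow (t : ℕ) (ht : 1 ≤ t) : v t ≤ v (t - 1) + (C₁ + C₂) * (ub - lb) :=
    pso_step_le_add (hv t ht) hC₁.le hC₂.le hpb hgb (hr₁ t) (hr₂ t) (hx _)
  have hwidth : 0 ≤ ub - lb := by linarith [hpb.1, hpb.2]
  have hgap : 0 ≤ (C₁ + C₂) * (ub - lb) := mul_nonneg (by linarith) hwidth
  have habove (t : ℕ) (ht : 2 ≤ t) (hmax : x (t - 1) ≥ max pb gb) : v t ≤ v (t - 1) :=
    pso_step_le_of_max_le (hv t (by omega)) hC₁.le hC₂.le (hr₁ t).1 (hr₂ t).1 hmax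
  have hat_lb (t : ℕ) (ht : 2 ≤ t) (hlb : x (t - 1) = lb) : v t ≤ (C₁ + C₂) * (ub - lb) := by
    linarith [hclamp (t - 1) (by omega) hlb, hgrow t (by omega)]
  have hinside (t : ℕ) (ht : 2 ≤ t) (hlb : lb < x (t - 1)) (hmax : x (t - 1) < max pb gb)
      (hdisp : v (t - 1) = x (t - 1) - x (t - 2)) : v t ≤ (C₁ + C₂ + 1) * (ub - lb) := by
    linarith [hgrow t (by omega), (hx (t - 1)).2, (hx (t - 2)).1]
  refine ⟨habove, hat_lb, hinside, fun hv0 t => ?_⟩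
  induction t with
  | zero => linarith
  | succ n ih =>
    rcases n with _ | n
    · linarith [hgrow 1 le_rfl]
    rcases le_or_gt (max pb gb) (x (n + 1)) with hmax | hmax
    · exact (habove (n + 2) (by omega) hmax).trans ih
    rcases (hx (n + 1)).1.eq_or_lt with hlb | hlb
    · linarith [hat_lb (n + 2) (by omega) hlb.symm]
    have hub : x (n + 1) < ub := hmax.trans_le (max_le hpb.2 hgb.2)
    refine hinside (n + 2) (by omega) hlb hmax ?_
    linarith [hinterior (n + 2) (by omega) hlb hub]

/-- Lemma 3: case-by-case bounds on the PSO velocity recursion with `ω = 1`, and the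
resulting uniform bound `v(t) ≤ (C₁+C₂+1)(ub-lb)` for all `t`. -/
theorem velocity_uniform_upper_bound
    (lb ub pb gb C₁ C₂ : ℝ) (hlu : lb < ub)
    (hC₁ : 0 < C₁) (hC₂ : 0 < C₂)
    (hpb : pb ∈ Set.Icc lb ub) (hgb : gb ∈ Set.Icc lb ub)
    (x v r₁ r₂ : ℕ → ℝ)
    (hr₁ : ∀ t, r₁ t ∈ Set.Icc (0 : ℝ) 1) (hr₂ : ∀ t, r₂ t ∈ Set.Icc (0 : ℝ) 1)
    (hx : ∀ t, x t ∈ Set.Icc lb ub)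
    (hv : ∀ t : ℕ, 1 ≤ t →
      v t = v (t - 1) + C₁ * r₁ t * (pb - x (t - 1)) + C₂ * r₂ t * (gb - x (t - 1)))
    (hclamp : ∀ t : ℕ, 1 ≤ t → x t = lb → v t ≤ 0)
    (hinterior : ∀ t : ℕ, 2 ≤ t → lb < x (t - 1) → x (t - 1) < ub →
      x (t - 1) = x (t - 2) + v (t - 1)) :
    (∀ t : ℕ, 2 ≤ t → x (t - 1) ≥ max pb gb → v t ≤ v (t - 1)) ∧
    (∀ t : ℕ, 2 ≤ t → x (t - 1) = lb → v t ≤ (C₁ + C₂) * (ub - lb)) ∧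
    (∀ t : ℕ, 2 ≤ t → lb < x (t - 1) → x (t - 1) < max pb gb →
      v (t - 1) = x (t - 1) - x (t - 2) → v t ≤ (C₁ + C₂ + 1) * (ub - lb)) ∧
    (v 0 ≤ ub - lb → ∀ t : ℕ, v t ≤ (C₁ + C₂ + 1) * (ub - lb)) :=
  velocity_uniform_upper_bound_general lb ub pb gb C₁ C₂ hC₁ hC₂ hpb hgb x v r₁ r₂ hr₁ hr₂ hx hv
    hclamp hinterior
end
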